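/- arXiv:2212.12792 — 5 statements merged into one kernel-verified Lean document; each statement's English description precedes it below -/
import Mathlib

section
/- Let K : ℝ → ℝ³ be an injective map that is differentiable at a point x ∈ ℝ with derivative vector K'(x) ≠ 0, and let a < b be real numbers. Then, as r → 0 from the right, the normalized secant vector unit(K(x + r·b) − K(x + r·a)) tends to the unit tangent vector unit(K'(x)). (This is the smooth extension of the Gauss map h₁₃ to the hidden and anomalous boundary faces of the compactified configuration space, where configuration points collide on the knot; it is the key computation showing the pushforward of the localized form vanishes on those faces whenever the unit tangent avoids the support of the bump form.) -/
/-! The rescaled secant `r⁻¹ • (K (x + r * b) - K (x + r * a))` tends to `(b - a) • K' ≠ 0`.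
Normalization is continuous away from `0` and blind to the positive factor `r⁻¹`, so the
normalized secant tends to `unit ((b - a) • K') = unit K'`. -/

open Filter Topology

noncomputable section

abbrev R3 := EuclideanSpace ℝ (Fin 3)

/-- Normalization of a vector, with the convention `unit 0 = 0`. -/
def unit (v : R3) : R3 := ‖v‖⁻¹ • v

lemma unit_smul_of_pos {c : ℝ} (hc : 0 < c) (v : R3) : unit (c • v) = unit v := by
  rw [unit, unit, norm_smul, Real.norm_of_nonneg hc.le, mul_inv_rev, smul_smul,
    inv_mul_cancel_right₀ hc.ne']

lemma continuousAt_unit {v : R3} (hv : v ≠ 0) : ContinuousAt unit v :=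
  (continuous_norm.continuousAt.inv₀ (norm_ne_zero_iff.mpr hv)).smul continuousAt_id

lemma HasDerivAt.tendsto_secant {E : Type*} [NormedAddCommGroup E] [NormedSpace ℝ E]
    {f : ℝ → E} {f' : E} {x : ℝ} (hf : HasDerivAt f f' x) (a b : ℝ) :
    Tendsto (fun r : ℝ => r⁻¹ • (f (x + r * b) - f (x + r * a))) (𝓝[≠] 0)
      (𝓝 ((b - a) • f')) := by
  have along : ∀ c : ℝ, HasDerivAt (fun r : ℝ => f (x + r * c)) (c • f') 0 := fun c =>
    HasDerivAt.scomp_of_eq 0 hf ((hasDerivAt_mul_const c).const_add x) (by simp)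
  simpa [sub_smul] using ((along b).sub (along a)).tendsto_slope_zero

theorem secant_tendsto_unit_tangent_general (K : ℝ → R3)
    (x : ℝ) (K' : R3) (hd : HasDerivAt K K' x) (hK' : K' ≠ 0)
    (a b : ℝ) (hab : a < b) :
    Tendsto (fun r : ℝ => unit (K (x + r * b) - K (x + r * a))) (𝓝[>] 0)
      (𝓝 (unit K')) := by
  have hsecant := (hd.tendsto_secant a b).mono_left (nhdsGT_le_nhdsNE 0)
  have hlim := (continuousAt_unit (smul_ne_zero (sub_pos.2 hab).ne' hK')).tendsto.comp hsecant
  rw [unit_smul_of_pos (sub_pos.2 hab)] at hlim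
  refine hlim.congr' ?_
  filter_upwards [self_mem_nhdsWithin] with r (hr : 0 < r)
  exact unit_smul_of_pos (inv_pos.2 hr) _

/-- The smooth extension of the Gauss map to hidden and anomalous faces:
for an injective `K` differentiable at `x` with nonzero derivative, the normalized
secant `unit (K (x + r*b) - K (x + r*a))` (with `a < b`) tends to the unit tangent
`unit K'` as `r → 0⁺`. -/
theorem secant_tendsto_unit_tangent (K : ℝ → R3) (hK : Function.Injective K)
    (x : ℝ) (K' : R3) (hd : HasDerivAt K K' x) (hK' : K' ≠ 0)
    (a b : ℝ) (hab : a < b) :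
    Tendsto (fun r : ℝ => unit (K (x + r * b) - K (x + r * a))) (𝓝[>] 0)
      (𝓝 (unit K')) :=
  secant_tendsto_unit_tangent_general K x K' hd hK' a b hab

end
end

section
/- Let N ∈ ℝ³ with ‖N‖ = 1, let c, ξ ∈ ℝ³ and u ∈ ℝ with ξ ≠ 0 and u • c ≠ ξ, and let ε ≥ 0. If ‖unit ξ − N‖ ≤ ε and ‖unit(u • c − ξ) − N‖ ≤ ε, then |u| · ‖c ×₃ N‖ ≤ ε · (‖ξ‖ + ‖u • c − ξ‖). (This quantitative estimate shows that on the hidden and anomalous faces of Cnf[𝒦,ℝ³;3,1] indexed by {i, j, 4}, the collision parameter u along the knot is forced to be of order ε whenever both Gauss directions lie in the ε-disk around N and the tangent direction c is not parallel to N.) -/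
open Filter Topology

noncomputable section

/-- The cross product on `ℝ³ = EuclideanSpace ℝ (Fin 3)`. -/
def cross3 (v w : R3) : R3 :=
  (WithLp.equiv 2 (Fin 3 → ℝ)).symm
    (crossProduct ((WithLp.equiv 2 (Fin 3 → ℝ)) v) ((WithLp.equiv 2 (Fin 3 → ℝ)) w))

infixl:74 " ×₃ " => cross3

lemma cross3_def (v w : R3) : v ×₃ w = WithLp.toLp 2 (crossProduct v.ofLp w.ofLp) := rfl

lemma cross3_add_left (a b w : R3) : (a + b) ×₃ w = a ×₃ w + b ×₃ w := by
  simp [cross3_def]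

lemma cross3_smul_left (r : ℝ) (v w : R3) : (r • v) ×₃ w = r • (v ×₃ w) := by
  simp [cross3_def]

lemma cross3_sub_right (v a b : R3) : v ×₃ (a - b) = v ×₃ a - v ×₃ b := by
  simp [cross3_def]

lemma cross3_smul_self (r : ℝ) (v : R3) : v ×₃ (r • v) = 0 := by
  simp [cross3_def]

lemma norm_cross3_sq (v w : R3) :
    ‖v ×₃ w‖ ^ 2 = ‖v‖ ^ 2 * ‖w‖ ^ 2 - inner ℝ v w ^ 2 := by
  simp only [← real_inner_self_eq_norm_sq, cross3_def, EuclideanSpace.inner_eq_star_dotProduct,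
    star_trivial, cross_dot_cross]
  rw [dotProduct_comm w.ofLp v.ofLp]
  ring

lemma norm_cross3_le (v w : R3) : ‖v ×₃ w‖ ≤ ‖v‖ * ‖w‖ := by
  refine (pow_le_pow_iff_left₀ (norm_nonneg _) (by positivity) two_ne_zero).1 ?_
  rw [mul_pow, norm_cross3_sq]
  nlinarith [sq_nonneg (inner ℝ v w)]

/-- Since `v ×₃ unit v = 0`, only the deviation of `N` from the direction of `v` contributes. -/
lemma norm_cross3_le_norm_mul_norm_unit_sub (v N : R3) :
    ‖v ×₃ N‖ ≤ ‖v‖ * ‖unit v - N‖ := by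
  calc ‖v ×₃ N‖ = ‖v ×₃ (N - unit v)‖ := by rw [cross3_sub_right, unit, cross3_smul_self, sub_zero]
    _ ≤ ‖v‖ * ‖unit v - N‖ := by rw [norm_sub_rev (unit v)]; exact norm_cross3_le _ _

theorem collision_parameter_estimate_general (N c ξ : R3) (u : ℝ) (ε : ℝ)
    (h1 : ‖unit ξ - N‖ ≤ ε) (h2 : ‖unit (u • c - ξ) - N‖ ≤ ε) :
    |u| * ‖c ×₃ N‖ ≤ ε * (‖ξ‖ + ‖u • c - ξ‖) := by
  have hsplit : u • (c ×₃ N) = (u • c - ξ) ×₃ N + ξ ×₃ N := by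
    rw [← cross3_smul_left, ← cross3_add_left, sub_add_cancel]
  have hdev (v : R3) (hv : ‖unit v - N‖ ≤ ε) : ‖v ×₃ N‖ ≤ ‖v‖ * ε :=
    (norm_cross3_le_norm_mul_norm_unit_sub v N).trans (by gcongr)
  calc |u| * ‖c ×₃ N‖ = ‖(u • c - ξ) ×₃ N + ξ ×₃ N‖ := by
        rw [← hsplit, norm_smul, Real.norm_eq_abs]
    _ ≤ ‖(u • c - ξ) ×₃ N‖ + ‖ξ ×₃ N‖ := norm_add_le _ _
    _ ≤ ‖u • c - ξ‖ * ε + ‖ξ‖ * ε := add_le_add (hdev _ h2) (hdev _ h1)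
    _ = ε * (‖ξ‖ + ‖u • c - ξ‖) := by ring

/-- Quantitative estimate on the hidden and anomalous faces of `Cnf[𝒦,ℝ³;3,1]`:
if both Gauss directions lie in the `ε`-disk around `N`, the collision parameter
`u` along the knot satisfies `|u| * ‖c ×₃ N‖ ≤ ε * (‖ξ‖ + ‖u • c - ξ‖)`. -/
theorem collision_parameter_estimate (N c ξ : R3) (u : ℝ) (ε : ℝ)
    (hN : ‖N‖ = 1) (hξ : ξ ≠ 0) (h : u • c ≠ ξ) (hε : 0 ≤ ε)
    (h1 : ‖unit ξ - N‖ ≤ ε) (h2 : ‖unit (u • c - ξ) - N‖ ≤ ε) :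
    |u| * ‖c ×₃ N‖ ≤ ε * (‖ξ‖ + ‖u • c - ξ‖) :=
  collision_parameter_estimate_general N c ξ u ε h1 h2

end
end

section
/- Let K : ℝ → ℝ³ be differentiable at x ∈ ℝ with derivative vector K'(x), let u ∈ ℝ and ξ ∈ ℝ³, and assume u • K'(x) ≠ ξ. Then, as r → 0 from the right, unit(K(x + r·u) − (K(x) + r • ξ)) tends to unit(u • K'(x) − ξ). (This computes the smooth extension of the Gauss map between a point on the knot and the off-knot point on the hidden faces of Cnf[𝒦,ℝ³;3,1] where a point on the knot and the off-knot point collide simultaneously, with relative collision directions u along the knot and ξ in space.) -/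
/-! The secant `K (x + r u) - (K x + r • ξ)` is `r` times a difference quotient of
`r ↦ K (x + r u) - r • ξ`, whose derivative at `0` is `u • K' - ξ`. Normalization ignores
the positive factor `r` and is continuous away from `0`, so the normalized secants converge
to the normalized derivative. -/

open Filter Topology

noncomputable section

lemma HasDerivAt.tendsto_unit_sub_nhdsGT {g : ℝ → R3} {v : R3} {t : ℝ}
    (hg : HasDerivAt g v t) (hv : v ≠ 0) :
    Tendsto (fun r : ℝ => unit (g (t + r) - g t)) (𝓝[>] 0) (𝓝 (unit v)) := by
  refine ((continuousAt_unit hv).tendsto.comp hg.tendsto_slope_zero_right).congr' ?_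
  filter_upwards [self_mem_nhdsWithin] with r (hr : 0 < r)
  exact unit_smul_of_pos (inv_pos.mpr hr) _

/-- The smooth extension of the Gauss map between a point on the knot and the
off-knot point on the hidden faces of `Cnf[𝒦,ℝ³;3,1]`: with relative collision
directions `u` along the knot and `ξ` in space,
`unit (K (x + r*u) - (K x + r • ξ))` tends to `unit (u • K' - ξ)` as `r → 0⁺`. -/
theorem gauss_knot_offknot_collision (K : ℝ → R3) (x : ℝ) (K' : R3)
    (hd : HasDerivAt K K' x) (u : ℝ) (ξ : R3) (h : u • K' ≠ ξ) :
    Tendsto (fun r : ℝ => unit (K (x + r * u) - (K x + r • ξ))) (𝓝[>] 0)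
      (𝓝 (unit (u • K' - ξ))) := by
  have hline : HasDerivAt (fun r : ℝ => x + r * u) u 0 := by
    simpa using (hasDerivAt_mul_const u).const_add x
  have hsecant : HasDerivAt (fun r : ℝ => K (x + r * u) - r • ξ) (u • K' - ξ) 0 := by
    have hK : HasDerivAt K K' (x + 0 * u) := by simpa using hd
    simpa using (hK.scomp 0 hline).fun_sub ((hasDerivAt_id' 0).smul_const ξ)
  refine (hsecant.tendsto_unit_sub_nhdsGT (sub_ne_zero.mpr h)).congr fun r => ?_
  simp only [zero_add, zero_mul, add_zero, zero_smul, sub_zero, sub_add_eq_sub_sub,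
    sub_right_comm]

end
end

section
/- Let n ≥ 1 and let b : Fin n → ℕ be an injective function whose last value is strictly minimal, i.e. b (n−1) < b i for every i ≠ n−1. Then: (1) the number of triples (i, j, k) with i < j < k in Fin n such that b j < b i and b j < b k is at most binomial(n−1, 3); and (2) the number of quadruples (i, j, k, l) with i < j < k < l in Fin n such that b k < b i and b j < b l is at most binomial(n−1, 4). (These are the counts of triple-crossing and chord-pair subdiagram contributions in the multiple-crossing Gauss diagram of a pedal (petal) projection: since the last endpoint carries the minimal level, no eligible triple or quadruple can use the last position, which yields the übercrossing number lower bound for the Casson invariant.) -/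
/-!
An eligible triple or quadruple ends with a position whose level exceeds that of an earlier
position; since the last position carries the strictly minimal level, it can never be that final
entry, so all entries lie among the first `n - 1` positions. A strictly increasing tuple is
determined by its set of entries, hence there are at most `(n - 1).choose k` of them.
-/

theorem Finset.card_le_choose_of_injOn_pairwise_lt {α β : Type*} [LinearOrder α] (s : Finset α)
    (T : Finset β) (f : β → List α) (k : ℕ) (hf : Set.InjOn f T)
    (hsorted : ∀ x ∈ T, (f x).Pairwise (· < ·)) (hlength : ∀ x ∈ T, (f x).length = k)
    (hmem : ∀ x ∈ T, ∀ a ∈ f x, a ∈ s) : T.card ≤ s.card.choose k := by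
  rw [← Finset.card_powersetCard]
  refine Finset.card_le_card_of_injOn (fun x => (f x).toFinset) (fun x hx => ?_) ?_
  · rw [Finset.mem_coe, Finset.mem_powersetCard,
      List.toFinset_card_of_nodup (hsorted x hx).nodup, hlength x hx]
    exact ⟨fun a ha => hmem x hx a (List.mem_toFinset.mp ha), rfl⟩
  · intro x hx y hy hxy
    refine hf hx hy ((hsorted x hx).eq_of_mem_iff (hsorted y hy) fun a => ?_)
    rw [← List.mem_toFinset, ← List.mem_toFinset]
    exact Finset.ext_iff.mp hxy a

theorem ne_of_lt_of_apply_lt {α β : Type*} [Preorder α] [Preorder β] {b : α → β} {m j k : α}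
    (hm : ∀ i, i ≠ m → b m < b i) (hjk : j < k) (hb : b j < b k) : k ≠ m := by
  rintro rfl
  exact lt_asymm hb (hm j hjk.ne)

/-- Counts of triple-crossing and chord-pair subdiagram contributions in the
multiple-crossing Gauss diagram of a pedal projection: if the level function
`b : Fin n → ℕ` is injective and its last value is strictly minimal, then the
number of eligible triples `i < j < k` with `b j < b i` and `b j < b k` is at
most `(n-1).choose 3`, and the number of eligible quadruples `i < j < k < l`
with `b k < b i` and `b j < b l` is at most `(n-1).choose 4`. -/
theorem pedal_subdiagram_counts (n : ℕ) (hn : 1 ≤ n) (b : Fin n → ℕ)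
    (hmin : ∀ i : Fin n, i ≠ ⟨n - 1, by omega⟩ → b ⟨n - 1, by omega⟩ < b i) :
    (Finset.univ.filter (fun x : Fin n × Fin n × Fin n =>
        x.1 < x.2.1 ∧ x.2.1 < x.2.2 ∧ b x.2.1 < b x.1 ∧ b x.2.1 < b x.2.2)).card
      ≤ (n - 1).choose 3 ∧
    (Finset.univ.filter (fun x : Fin n × Fin n × Fin n × Fin n =>
        x.1 < x.2.1 ∧ x.2.1 < x.2.2.1 ∧ x.2.2.1 < x.2.2.2 ∧
          b x.2.2.1 < b x.1 ∧ b x.2.1 < b x.2.2.2)).card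
      ≤ (n - 1).choose 4 := by
  set L : Fin n := ⟨n - 1, by omega⟩
  have lt_last {j k : Fin n} (hjk : j < k) (hb : b j < b k) : k < L :=
    lt_of_le_of_ne (Fin.le_iff_val_le_val.mpr (by simp [L]; omega))
      (ne_of_lt_of_apply_lt hmin hjk hb)
  have hcard : (Finset.Iio L).card = n - 1 := Fin.card_Iio L
  rw [← hcard]
  constructor
  · refine Finset.card_le_choose_of_injOn_pairwise_lt _ _ (fun x => [x.1, x.2.1, x.2.2]) 3
      (fun x _ y _ h => by simpa [Prod.ext_iff] using h) ?_ (fun _ _ => rfl) ?_ <;>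
      simp only [Finset.mem_filter, Finset.mem_univ, true_and]
    · rintro ⟨i, j, k⟩ ⟨hij, hjk, -⟩
      simp [hij, hjk, hij.trans hjk]
    · rintro ⟨i, j, k⟩ ⟨hij, hjk, -, hb⟩ a ha
      have hk := lt_last hjk hb
      simp only [List.mem_cons, List.not_mem_nil, or_false] at ha
      rcases ha with rfl | rfl | rfl <;> simp only [Finset.mem_Iio] <;> order
  · refine Finset.card_le_choose_of_injOn_pairwise_lt _ _
      (fun x => [x.1, x.2.1, x.2.2.1, x.2.2.2]) 4
      (fun x _ y _ h => by simpa [Prod.ext_iff] using h) ?_ (fun _ _ => rfl) ?_ <;>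
      simp only [Finset.mem_filter, Finset.mem_univ, true_and]
    · rintro ⟨i, j, k, l⟩ ⟨hij, hjk, hkl, -⟩
      simp [hij, hjk, hkl, hij.trans hjk, hjk.trans hkl, hij.trans (hjk.trans hkl)]
    · rintro ⟨i, j, k, l⟩ ⟨hij, hjk, hkl, -, hb⟩ a ha
      have hl := lt_last (hjk.trans hkl) hb
      simp only [List.mem_cons, List.not_mem_nil, or_false] at ha
      rcases ha with rfl | rfl | rfl | rfl <;> simp only [Finset.mem_Iio] <;> order
end

section
/- Fix n ≥ 2 and a bijection a : Fin n → Fin n with a 0 = 0 (the pedal permutation, recording the level of each strand of an n-petal übercrossing projection in the order traversed, smaller value meaning higher strand). Let π : Fin n → Fin n be given by π i = i + 1 for i < n − 1 and π (n−1) = 0, and set d i := a (π i) (the levels in Gauss-diagram order, so d (n−1) = 0 is minimal). For pedal positions p < q define the crossing sign s(p, q) := (−1)^(q−p+1) if a p < a q and s(p, q) := (−1)^(q−p) otherwise, and for diagram positions i ≠ j set S(i, j) := s(min(π i, π j), max(π i, π j)). Define the Casson count C(a) as the sum, over all triples i < j < k in Fin n with d j < d i and d j < d k, of the contribution t(i,j,k)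 := 1 if S(i,j) = S(i,k) = S(j,k); t(i,j,k) := −1 if d k < d i and S(i,j) = S(i,k) and S(i,k) = −S(j,k); t(i,j,k) := −1 if d i < d k and S(j,k) = S(i,k) and S(i,k) = −S(i,j); t(i,j,k) := 0 otherwise; plus the sum, over all quadruples i < j < k < l in Fin n with d k < d i and d j < d l, of S(i,k) · S(j,l). Then |C(a)| ≤ binomial(n−1, 3) + binomial(n−1, 4). -/
/-!
Every crossing sign is `±1`, so an eligible triple contributes at most `1` in absolute value
and an eligible quadruple exactly `±1`. The last diagram position carries the minimal level
`d (n - 1) = 0`, so it can never be the position with the larger level in `d j < d k`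
(resp. `d j < d l`); hence every eligible triple or quadruple is an increasing tuple of the
first `n - 1` positions, and there are `(n - 1).choose 3` resp. `(n - 1).choose 4` of those.
-/

open Finset

section IncreasingTuples

variable {α : Type*} [LinearOrder α]

theorem card_le_choose_of_sortedLT {ι : Type*} {f : ι → List α} (hf : Function.Injective f)
    {F : Finset ι} {s : Finset α} {k : ℕ}
    (hF : ∀ x ∈ F, (f x).SortedLT ∧ (f x).length = k ∧ ∀ a ∈ f x, a ∈ s) :
    #F ≤ (#s).choose k := by
  rw [← card_powersetCard]
  refine card_le_card_of_injOn (fun x => (f x).toFinset) (fun x hx => ?_)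
    (fun x hx y hy hxy => ?_)
  · obtain ⟨hsorted, hlen, hmem⟩ := hF x hx
    rw [mem_coe, mem_powersetCard, List.toFinset_card_of_nodup hsorted.nodup, hlen]
    exact ⟨fun a ha => hmem a (List.mem_toFinset.1 ha), rfl⟩
  · exact hf ((hF x hx).1.eq_of_mem_iff (hF y hy).1 fun a => by
      simpa using Finset.ext_iff.1 hxy a)

variable [LocallyFiniteOrderBot α]

theorem card_le_choose_three_of_lt {F : Finset (α × α × α)} {b : α}
    (hF : ∀ x ∈ F, x.1 < x.2.1 ∧ x.2.1 < x.2.2 ∧ x.2.2 < b) :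
    #F ≤ (#(Iio b)).choose 3 := by
  refine card_le_choose_of_sortedLT (f := fun x => [x.1, x.2.1, x.2.2]) ?_ fun x hx => ?_
  · rintro ⟨_, _, _⟩ ⟨_, _, _⟩ h
    simpa using h
  · obtain ⟨h₁, h₂, h₃⟩ := hF x hx
    refine ⟨List.sortedLT_iff_pairwise.2 ?_, rfl, ?_⟩
    · simp [h₁, h₂, h₁.trans h₂]
    · simp only [List.mem_cons, List.not_mem_nil, or_false, mem_Iio]
      rintro a (rfl | rfl | rfl) <;> order

theorem card_le_choose_four_of_lt {F : Finset (α × α × α × α)} {b : α}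
    (hF : ∀ x ∈ F, x.1 < x.2.1 ∧ x.2.1 < x.2.2.1 ∧ x.2.2.1 < x.2.2.2 ∧ x.2.2.2 < b) :
    #F ≤ (#(Iio b)).choose 4 := by
  refine card_le_choose_of_sortedLT (f := fun x => [x.1, x.2.1, x.2.2.1, x.2.2.2]) ?_
    fun x hx => ?_
  · rintro ⟨_, _, _, _⟩ ⟨_, _, _, _⟩ h
    simpa using h
  · obtain ⟨h₁, h₂, h₃, h₄⟩ := hF x hx
    refine ⟨List.sortedLT_iff_pairwise.2 ?_, rfl, ?_⟩
    · simp [h₁, h₂, h₃, h₁.trans h₂, h₂.trans h₃, (h₁.trans h₂).trans h₃]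
    · simp only [List.mem_cons, List.not_mem_nil, or_false, mem_Iio]
      rintro a (rfl | rfl | rfl | rfl) <;> order

end IncreasingTuples

theorem abs_sum_le_card {R ι : Type*} [Ring R] [LinearOrder R] [IsOrderedRing R]
    {F : Finset ι} {f : ι → R} (hf : ∀ x ∈ F, |f x| ≤ 1) : |∑ x ∈ F, f x| ≤ #F := by
  calc |∑ x ∈ F, f x| ≤ ∑ x ∈ F, |f x| := abs_sum_le_sum_abs _ _
    _ ≤ #F • (1 : R) := sum_le_card_nsmul _ _ _ hf
    _ = #F := by simp

theorem lt_of_apply_lt_of_isMin_apply {α β : Type*} [PartialOrder α] [Preorder β] {d : α → β}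
    {l j k : α}
    (hl : ∀ i, i ≤ l) (hdl : ∀ i, d l ≤ d i) (h : d j < d k) : k < l :=
  (hl k).lt_of_ne (by rintro rfl; exact (hdl j).not_gt h)

theorem eq_finRotate {n : ℕ} (hn : 0 < n) (π : Fin n → Fin n)
    (hπ : ∀ (i : Fin n) (_hi : (i : ℕ) < n - 1), π i = ⟨(i : ℕ) + 1, by omega⟩)
    (hπlast : π ⟨n - 1, by omega⟩ = ⟨0, by omega⟩) : π = finRotate n := by
  obtain ⟨m, rfl⟩ : ∃ m, n = m + 1 := ⟨n - 1, by omega⟩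
  ext i
  rw [coe_finRotate]
  split_ifs with h
  · subst h
    exact congrArg Fin.val hπlast
  · rw [hπ i (by simp only [Fin.ext_iff, Fin.val_last] at h; omega)]

/-- The combinatorial form of the übercrossing bound
`|c₂(K)| ≤ C(ü(K)-1, 3) + C(ü(K)-1, 4)`: the Casson count `C` computed from the
pedal permutation `a` of an `n`-petal übercrossing projection satisfies
`|C| ≤ (n-1).choose 3 + (n-1).choose 4`. -/
theorem pedal_casson_count_bound (n : ℕ) (hn : 2 ≤ n)
    (a : Fin n → Fin n)
    (ha0 : a ⟨0, by omega⟩ = ⟨0, by omega⟩)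
    -- the cyclic reindexing from pedal positions to Gauss-diagram positions
    (π : Fin n → Fin n)
    (hπ : ∀ (i : Fin n) (_hi : (i : ℕ) < n - 1), π i = ⟨(i : ℕ) + 1, by omega⟩)
    (hπlast : π ⟨n - 1, by omega⟩ = ⟨0, by omega⟩)
    -- the levels in Gauss-diagram order
    (d : Fin n → Fin n) (hd : ∀ i : Fin n, d i = a (π i))
    -- crossing signs in pedal positions
    (s : Fin n → Fin n → ℤ)
    (hs : ∀ p q : Fin n, p < q →
      s p q = if a p < a q then (-1 : ℤ) ^ ((q : ℕ) - (p : ℕ) + 1)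
              else (-1 : ℤ) ^ ((q : ℕ) - (p : ℕ)))
    -- crossing signs in diagram positions
    (S : Fin n → Fin n → ℤ)
    (hS : ∀ i j : Fin n, i ≠ j → S i j = s (min (π i) (π j)) (max (π i) (π j)))
    -- the contribution of an eligible triple
    (t : Fin n → Fin n → Fin n → ℤ)
    (ht : ∀ i j k : Fin n,
      t i j k =
        if S i j = S i k ∧ S i k = S j k then 1
        else if d k < d i ∧ S i j = S i k ∧ S i k = -S j k then -1
        else if d i < d k ∧ S j k = S i k ∧ S i k = -S i j then -1
        else 0)
    -- the Casson count
    (C : ℤ)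
    (hC : C =
      (∑ x ∈ Finset.univ.filter (fun x : Fin n × Fin n × Fin n =>
          x.1 < x.2.1 ∧ x.2.1 < x.2.2 ∧ d x.2.1 < d x.1 ∧ d x.2.1 < d x.2.2),
        t x.1 x.2.1 x.2.2) +
      (∑ x ∈ Finset.univ.filter (fun x : Fin n × Fin n × Fin n × Fin n =>
          x.1 < x.2.1 ∧ x.2.1 < x.2.2.1 ∧ x.2.2.1 < x.2.2.2 ∧
            d x.2.2.1 < d x.1 ∧ d x.2.1 < d x.2.2.2),
        S x.1 x.2.2.1 * S x.2.1 x.2.2.2)) :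
    |C| ≤ ((n - 1).choose 3 : ℤ) + ((n - 1).choose 4 : ℤ) := by
  have hπinj : Function.Injective π :=
    eq_finRotate (by omega) π hπ hπlast ▸ (finRotate n).injective
  have hSabs : ∀ i j, i ≠ j → |S i j| = 1 := fun i j hij => by
    rw [hS i j hij, hs _ _ (min_lt_max.2 (hπinj.ne hij))]
    split_ifs <;> simp
  have htabs : ∀ i j k, |t i j k| ≤ 1 := fun i j k => by
    rw [ht]
    split_ifs <;> simp
  set last : Fin n := ⟨n - 1, by omega⟩
  have hlast : ∀ i, i ≤ last := fun i => Fin.le_def.2 (by simp only [last]; omega)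
  have hdlast : ∀ i, d last ≤ d i := fun i => by
    rw [hd, hπlast, ha0]
    exact Fin.le_def.2 (Nat.zero_le _)
  have hcard : #(Iio last) = n - 1 := Fin.card_Iio last
  rw [hC]
  refine (abs_add_le _ _).trans (add_le_add ?_ ?_)
  · refine (abs_sum_le_card fun x _ => htabs _ _ _).trans ?_
    refine hcard ▸ Nat.cast_le.2 (card_le_choose_three_of_lt fun x hx => ?_)
    simp only [mem_filter, mem_univ, true_and] at hx
    exact ⟨hx.1, hx.2.1, lt_of_apply_lt_of_isMin_apply hlast hdlast hx.2.2.2⟩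
  · refine (abs_sum_le_card fun x hx => ?_).trans ?_
    · simp only [mem_filter, mem_univ, true_and] at hx
      rw [abs_mul, hSabs _ _ (hx.1.trans hx.2.1).ne, hSabs _ _ (hx.2.1.trans hx.2.2.1).ne,
        one_mul]
    refine hcard ▸ Nat.cast_le.2 (card_le_choose_four_of_lt fun x hx => ?_)
    simp only [mem_filter, mem_univ, true_and] at hx
    exact ⟨hx.1, hx.2.1, hx.2.2.1, lt_of_apply_lt_of_isMin_apply hlast hdlast hx.2.2.2.2⟩
end
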